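/- arXiv:1508.01348 — 2 statements merged into one kernel-verified Lean document; each statement's English description precedes it below -/
import Mathlib

section
/- If n ≥ 4 is a power of 2, then the exponent of the Weyl group W(Dₙ) = Vₑ ⋊ Sₙ equals the exponent of the symmetric group Sₙ. -/
open Multiplicative

abbrev Vn (n : ℕ) := Multiplicative (Fin n → ZMod 2)

def permAut (n : ℕ) : Equiv.Perm (Fin n) →* MulAut (Vn n) where
  toFun σ :=
    { toFun := fun v => ofAdd fun i => toAdd v (σ⁻¹ i)
      invFun := fun v => ofAdd fun i => toAdd v (σ i)
      left_inv := fun v => by simp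
      right_inv := fun v => by simp
      map_mul' := fun v w => rfl }
  map_one' := rfl
  map_mul' := fun σ τ => rfl

@[simp] lemma permAut_apply (n : ℕ) (σ : Equiv.Perm (Fin n)) (v : Vn n) (i : Fin n) :
    toAdd (permAut n σ v) i = toAdd v (σ⁻¹ i) := rfl

def Ve (n : ℕ) : Subgroup (Vn n) where
  carrier := {v | ∑ i, toAdd v i = 0}
  one_mem' := by simp
  mul_mem' := by
    intro a b ha hb
    simp only [Set.mem_setOf_eq, toAdd_mul, Pi.add_apply, Finset.sum_add_distrib] at *
    rw [ha, hb, add_zero]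
  inv_mem' := by
    intro a ha
    simp only [Set.mem_setOf_eq, toAdd_inv, Pi.neg_apply, Finset.sum_neg_distrib] at *
    rw [ha, neg_zero]

lemma permAut_mem_Ve {n : ℕ} (σ : Equiv.Perm (Fin n)) {v : Vn n} (hv : v ∈ Ve n) :
    permAut n σ v ∈ Ve n := by
  have h : ∑ i, toAdd v (σ⁻¹ i) = ∑ i, toAdd v i := Equiv.sum_comp σ⁻¹ (toAdd v)
  show ∑ i, toAdd (permAut n σ v) i = 0
  exact h.trans (show ∑ i, toAdd v i = 0 from hv)

def permAutVe (n : ℕ) : Equiv.Perm (Fin n) →* MulAut (Ve n) where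
  toFun σ :=
    { toFun := fun v => ⟨permAut n σ (v : Vn n), permAut_mem_Ve σ v.2⟩
      invFun := fun v => ⟨permAut n σ⁻¹ (v : Vn n), permAut_mem_Ve σ⁻¹ v.2⟩
      left_inv := fun v => Subtype.ext <| Multiplicative.toAdd.injective <| funext fun i => by simp
      right_inv := fun v => Subtype.ext <| Multiplicative.toAdd.injective <| funext fun i => by simp
      map_mul' := fun v w => Subtype.ext (map_mul (permAut n σ) (v : Vn n) (w : Vn n)) }
  map_one' := rfl
  map_mul' := fun σ τ => rfl

/-- The Weyl group of `Bₙ` (equivalently `Cₙ`). -/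
abbrev WB (n : ℕ) := Vn n ⋊[permAut n] Equiv.Perm (Fin n)

/-- The Weyl group of `Dₙ`. -/
abbrev WD (n : ℕ) := Ve n ⋊[permAutVe n] Equiv.Perm (Fin n)

/-! `Sₙ` is a quotient of `W(Dₙ)`, so only `exp W(Dₙ) ∣ exp Sₙ =: e` needs proof. Since
`(v, σ)^e = (∑_{j<e} σ^j v, 1)`, the coordinate `i` of that sum is `e / c` times the sum of `v`
over the `σ`-orbit of `i`, of length `c`. As `Sₙ` contains an `n`-cycle, `n = 2^k` divides `e`,
so `e / c` is odd only if `2^k ∣ c`, i.e. the orbit is all of `Fin n`; then the sum is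
`∑ v = 0` because `v` is even. -/

open Finset Function

theorem Function.Periodic.sum_range_mul {M : Type*} [AddCommMonoid M] {f : ℕ → M} {c : ℕ}
    (hf : Periodic f c) (q : ℕ) :
    ∑ j ∈ range (q * c), f j = q • ∑ j ∈ range c, f j := by
  induction q with
  | zero => simp
  | succ q ih =>
    rw [Nat.succ_mul, sum_range_add, ih, succ_nsmul]
    refine congrArg _ (sum_congr rfl fun j _ => ?_)
    rw [add_comm, ← smul_eq_mul, hf.nsmul q j]

namespace Function

variable {α M : Type*} [AddCommMonoid M] {f : α → α} {x : α}

theorem IsPeriodicPt.sum_range_iterate {m : ℕ} (h : IsPeriodicPt f m x) (w : α → M) :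
    ∑ j ∈ range m, w (f^[j] x) =
      (m / minimalPeriod f x) • ∑ j ∈ range (minimalPeriod f x), w (f^[j] x) := by
  conv_lhs => rw [← Nat.div_mul_cancel h.minimalPeriod_dvd]
  exact Periodic.sum_range_mul (fun j => by simp only [iterate_add_minimalPeriod_eq]) _

theorem sum_range_minimalPeriod_iterate_of_eq_card [Fintype α]
    (h : minimalPeriod f x = Fintype.card α) (w : α → M) :
    ∑ j ∈ range (minimalPeriod f x), w (f^[j] x) = ∑ y, w y := by
  classical
  have hinj : Set.InjOn (f^[·] x) (range (minimalPeriod f x)) := fun a ha b hb =>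
    iterate_injOn_Iio_minimalPeriod (by simpa using ha) (by simpa using hb)
  rw [← sum_image hinj, eq_univ_of_card ((range _).image (f^[·] x))
    (by rw [card_image_of_injOn hinj, card_range, h])]

theorem IsPeriodicPt.sum_range_iterate_eq_zero [Fintype α] {p k m : ℕ} [Fact p.Prime]
    (hα : Fintype.card α = p ^ k) (hm : p ^ k ∣ m) (h : IsPeriodicPt f m x)
    (w : α → ZMod p) (hw : ∑ y, w y = 0) :
    ∑ j ∈ range m, w (f^[j] x) = 0 := by
  rw [h.sum_range_iterate, nsmul_eq_mul]
  set c := minimalPeriod f x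
  by_cases hp : p ∣ m / c
  · rw [(ZMod.natCast_eq_zero_iff _ _).mpr hp, zero_mul]
  have hc : 0 < c := Nat.pos_of_ne_zero fun hc => hp (by simp [hc])
  have hcop : (p ^ k).Coprime (m / c) :=
    ((Nat.Prime.coprime_iff_not_dvd Fact.out).mpr hp).pow_left k
  have hdvd : p ^ k ∣ c :=
    hcop.dvd_of_dvd_mul_left (by rwa [Nat.div_mul_cancel h.minimalPeriod_dvd])
  have hcard : c = Fintype.card α :=
    le_antisymm minimalPeriod_le_card (hα ▸ Nat.le_of_dvd hc hdvd)
  rw [sum_range_minimalPeriod_iterate_of_eq_card hcard, hw, mul_zero]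

end Function

theorem Fin.dvd_exponent_perm {n : ℕ} (hn : n ≠ 0) :
    n ∣ Monoid.exponent (Equiv.Perm (Fin n)) := by
  rcases Nat.lt_or_ge n 2 with h | h
  · obtain rfl : n = 1 := by omega
    exact one_dvd _
  simpa [(isCycle_finRotate_of_le h).orderOf, support_finRotate_of_le h] using
    Monoid.order_dvd_exponent (finRotate n)

theorem SemidirectProduct.mk_pow {N G : Type*} [CommGroup N] [Group G] {φ : G →* MulAut N}
    (v : N) (g : G) (m : ℕ) :
    (⟨v, g⟩ : N ⋊[φ] G) ^ m = ⟨∏ j ∈ range m, φ (g ^ j) v, g ^ m⟩ := by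
  induction m with
  | zero => rw [pow_zero, pow_zero, prod_range_zero]; rfl
  | succ m ih => rw [pow_succ, ih, mul_def, prod_range_succ, pow_succ]

theorem toAdd_prod_permAutVe_apply {n : ℕ} (v : Ve n) (σ : Equiv.Perm (Fin n)) (m : ℕ)
    (i : Fin n) :
    toAdd ((∏ j ∈ range m, permAutVe n (σ ^ j) v : Ve n) : Vn n) i =
      ∑ j ∈ range m, toAdd (v : Vn n) ((⇑σ⁻¹)^[j] i) := by
  rw [SubmonoidClass.coe_finsetProd, toAdd_prod, Finset.sum_apply]
  refine sum_congr rfl fun j _ => ?_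
  rw [Equiv.Perm.iterate_eq_pow, inv_pow]
  rfl

theorem exponent_weylD_of_pow_two_general (n : ℕ) (h2 : ∃ k : ℕ, n = 2 ^ k) :
    Monoid.exponent (WD n) = Monoid.exponent (Equiv.Perm (Fin n)) := by
  obtain ⟨k, rfl⟩ := h2
  set e := Monoid.exponent (Equiv.Perm (Fin (2 ^ k)))
  refine Nat.dvd_antisymm ?_ (MonoidHom.exponent_dvd SemidirectProduct.rightHom_surjective)
  rw [Monoid.exponent_dvd_iff_forall_pow_eq_one]
  rintro ⟨v, σ⟩
  have hσ : σ ^ e = 1 := Monoid.pow_exponent_eq_one σ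
  have hper (i : Fin (2 ^ k)) : IsPeriodicPt (⇑σ⁻¹) e i := by
    rw [IsPeriodicPt, IsFixedPt, Equiv.Perm.iterate_eq_pow, inv_pow, hσ, inv_one,
      Equiv.Perm.one_apply]
  have hdvd : 2 ^ k ∣ e := Fin.dvd_exponent_perm (by positivity)
  rw [SemidirectProduct.mk_pow]
  refine SemidirectProduct.ext (Subtype.ext (toAdd.injective (funext fun i => ?_))) hσ
  rw [toAdd_prod_permAutVe_apply]
  exact (hper i).sum_range_iterate_eq_zero (Fintype.card_fin _) hdvd _ v.2

/-- If `n ≥ 4` is a power of `2`, then the exponent of the Weyl group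
`W(Dₙ) = Vₑ ⋊ Sₙ` equals the exponent of the symmetric group `Sₙ`. -/
theorem exponent_weylD_of_pow_two (n : ℕ) (hn : 4 ≤ n) (h2 : ∃ k : ℕ, n = 2 ^ k) :
    Monoid.exponent (WD n) = Monoid.exponent (Equiv.Perm (Fin n)) :=
  exponent_weylD_of_pow_two_general n h2
end

section
/- If n ≥ 3 is not a power of 2, then the exponent of the Weyl group W(Dₙ) = Vₑ ⋊ Sₙ equals twice the exponent of the symmetric group Sₙ. -/
open Multiplicative

/-!
Embedding `Sₙ` as a complement shows `exp Sₙ ∣ exp W(Dₙ)`; conversely `g ^ exp Sₙ` has trivial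
`Sₙ`-component, so it lies in the elementary abelian 2-group `Vₑ`, whence `exp W(Dₙ) ∣ 2 exp Sₙ`.
To rule out `exp W(Dₙ) = exp Sₙ`, let `2^a` be the largest power of two below `n`. Every
permutation of 2-power order has all cycles of length at most `n < 2^(a+1)`, so `2^(a+1) ∤ exp Sₙ`.
On the other hand, since `2^a < n` there is a `2^a`-cycle `σ` with a fixed point `y`; for `x`
moved by `σ`, the element `(e_x + e_y, σ)` has order `2^(a+1)`, because the `x`-coordinate of its
`2^a`-th power `∑ᵢ σⁱ(e_x + e_y)` is `1`.
-/

namespace SemidirectProduct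

variable {N G : Type*} [Group G]

theorem pow_left_eq_prod [CommGroup N] {φ : G →* MulAut N} (x : N ⋊[φ] G) (k : ℕ) :
    (x ^ k).left = ∏ i ∈ Finset.range k, φ (x.right ^ i) x.left := by
  induction k with
  | zero => rfl
  | succ k ih =>
    rw [pow_succ, mul_left, ih, Finset.prod_range_succ, ← rightHom_eq_right, map_pow]

variable [Group N] {φ : G →* MulAut N}

theorem pow_eq_inl_left {x : N ⋊[φ] G} {k : ℕ} (hk : x.right ^ k = 1) :
    x ^ k = inl (x ^ k).left := by
  ext
  · rfl
  · rw [right_inl, ← rightHom_eq_right, map_pow, rightHom_eq_right, hk]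

theorem orderOf_eq_orderOf_right_mul (x : N ⋊[φ] G) (hx : IsOfFinOrder x.right) :
    orderOf x = orderOf x.right * orderOf (x ^ orderOf x.right).left := by
  have hdvd : orderOf x.right ∣ orderOf x := orderOf_map_dvd rightHom x
  rw [← orderOf_injective inl (inl_injective (φ := φ)), ← pow_eq_inl_left (pow_orderOf_eq_one _),
    orderOf_pow_of_dvd hx.orderOf_pos.ne' hdvd, Nat.mul_div_cancel' hdvd]

theorem exponent_right_dvd : Monoid.exponent G ∣ Monoid.exponent (N ⋊[φ] G) :=
  Monoid.exponent_dvd_of_monoidHom inr (inr_injective (φ := φ))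

theorem exponent_dvd_mul :
    Monoid.exponent (N ⋊[φ] G) ∣ Monoid.exponent N * Monoid.exponent G := by
  refine Monoid.exponent_dvd_of_forall_pow_eq_one fun x => ?_
  rw [mul_comm, pow_mul, pow_eq_inl_left (Monoid.pow_exponent_eq_one x.right), ← map_pow,
    Monoid.pow_exponent_eq_one, map_one]

end SemidirectProduct

namespace Equiv.Perm

variable {α : Type*} [Fintype α] {p : ℕ}

theorem orderOf_dvd_pow_log_card {σ : Perm α} (hp : p.Prime) {k : ℕ}
    (hσ : σ ^ p ^ k = 1) : orderOf σ ∣ p ^ Nat.log p (Fintype.card α) := by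
  classical
  rw [← lcm_cycleType, Multiset.lcm_dvd]
  intro c hc
  have hck : c ∣ p ^ k := (dvd_of_mem_cycleType hc).trans (orderOf_dvd_of_pow_eq_one hσ)
  obtain ⟨j, -, rfl⟩ := (Nat.dvd_prime_pow hp).mp hck
  have hle : p ^ j ≤ Fintype.card α :=
    (le_card_support_of_mem_cycleType hc).trans (Finset.card_le_univ _)
  exact pow_dvd_pow p (Nat.le_log_of_pow_le hp.one_lt hle)

theorem factorization_exponent_le_log (hp : p.Prime) :
    (Monoid.exponent (Perm α)).factorization p ≤ Nat.log p (Fintype.card α) := by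
  obtain ⟨σ, hσ⟩ := hp.exists_orderOf_eq_pow_factorization_exponent (G := Perm α)
  rw [← Nat.pow_dvd_pow_iff_le_right hp.one_lt, ← hσ]
  exact orderOf_dvd_pow_log_card hp (hσ ▸ pow_orderOf_eq_one σ)

end Equiv.Perm

open Finset

namespace Ve

variable {n : ℕ}

theorem sq_eq_one (w : Ve n) : w ^ 2 = 1 :=
  Subtype.ext <| toAdd.injective <| funext fun _ => CharTwo.two_nsmul _

theorem exponent_dvd_two : Monoid.exponent (Ve n) ∣ 2 :=
  Monoid.exponent_dvd_of_forall_pow_eq_one sq_eq_one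

def pair (x y : Fin n) : Ve n :=
  ⟨ofAdd (Pi.single x 1 + Pi.single y 1), by
    show ∑ i, (Pi.single x 1 + Pi.single y 1 : Fin n → ZMod 2) i = 0
    simp only [Pi.add_apply, sum_add_distrib, sum_pi_single', mem_univ, if_true]
    exact CharTwo.add_self_eq_zero 1⟩

theorem coe_prod_apply {ι : Type*} (s : Finset ι) (f : ι → Ve n) (x : Fin n) :
    toAdd ((∏ i ∈ s, f i : Ve n) : Vn n) x = ∑ i ∈ s, toAdd (f i : Vn n) x := by
  rw [SubmonoidClass.coe_finsetProd, toAdd_prod, Finset.sum_apply]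

end Ve

namespace WD

open Equiv.Perm

theorem orderOf_mk_pair {n : ℕ} {σ : Equiv.Perm (Fin n)} (hσ : σ.IsCycle) {x y : Fin n}
    (hx : σ x ≠ x) (hy : σ y = y) : orderOf (⟨Ve.pair x y, σ⟩ : WD n) = orderOf σ * 2 := by
  rw [SemidirectProduct.orderOf_eq_orderOf_right_mul _ (isOfFinOrder_of_finite σ)]
  congr 1
  refine orderOf_eq_prime (Ve.sq_eq_one _) fun h => ?_
  have hcoord := congrArg (fun w : Ve n => toAdd (w : Vn n) x) h
  simp only [SemidirectProduct.pow_left_eq_prod, Ve.coe_prod_apply] at hcoord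
  have hterm : ∀ i ∈ range (orderOf σ),
      toAdd ((permAutVe n (σ ^ i) (Ve.pair x y) : Ve n) : Vn n) x = if i = 0 then 1 else 0 := by
    intro i hi
    have hne_y : (σ ^ i)⁻¹ x ≠ y := fun h => by
      rw [inv_eq_iff_eq, pow_apply_eq_self_of_apply_eq_self hy] at h
      exact hx (h ▸ hy)
    have heq_x : (σ ^ i)⁻¹ x = x ↔ i = 0 := by
      rw [inv_eq_iff_eq, eq_comm, ← hσ.pow_eq_one_iff' hx, ← orderOf_dvd_iff_pow_eq_one]
      exact ⟨fun h => Nat.eq_zero_of_dvd_of_lt h (mem_range.mp hi), fun h => h ▸ dvd_zero _⟩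
    show (Pi.single x 1 + Pi.single y 1 : Fin n → ZMod 2) ((σ ^ i)⁻¹ x) = _
    simp only [Pi.add_apply, Pi.single_apply, hne_y, heq_x, if_false, add_zero]
  rw [sum_congr rfl hterm, sum_ite_eq', if_pos (mem_range.mpr (orderOf_pos σ))] at hcoord
  exact one_ne_zero hcoord

theorem exists_orderOf_eq_mul_two {n N : ℕ} (hN : 2 ≤ N) (hNn : N < n) :
    ∃ g : WD n, orderOf g = N * 2 := by
  have : NeZero n := ⟨by omega⟩
  have hi₀ : (⟨N - 1, by omega⟩ : Fin n) ≠ 0 :=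
    Fin.ne_of_val_ne (by rw [Fin.val_zero, Fin.val_mk]; omega)
  set σ : Equiv.Perm (Fin n) := Fin.cycleRange ⟨N - 1, by omega⟩
  have hσ : σ.IsCycle := Fin.isCycle_cycleRange hi₀
  have horder : orderOf σ = N := by
    rw [← lcm_cycleType, Fin.cycleType_cycleRange hi₀, Multiset.lcm_singleton, normalize_eq]
    exact Nat.sub_add_cancel (by omega)
  have hlast : σ ⟨n - 1, by omega⟩ = ⟨n - 1, by omega⟩ :=
    Fin.cycleRange_of_gt (Fin.mk_lt_mk.mpr (by omega))
  obtain ⟨x, hx, -⟩ := id hσ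
  exact ⟨⟨Ve.pair x _, σ⟩, horder ▸ orderOf_mk_pair hσ hx hlast⟩

end WD

theorem Nat.eq_two_mul_of_dvd_of_dvd_two_mul {a b : ℕ} (hab : a ∣ b) (hba : b ∣ 2 * a)
    (hne : b ≠ a) : b = 2 * a := by
  obtain ⟨t, rfl⟩ := hab
  rcases Nat.eq_zero_or_pos a with rfl | ha
  · simp
  have ht : t ∣ 2 := Nat.dvd_of_mul_dvd_mul_left ha (by rwa [mul_comm 2] at hba)
  rcases (Nat.dvd_prime Nat.prime_two).mp ht with rfl | rfl
  · exact absurd (mul_one a) hne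
  · exact mul_comm a 2

/-- If `n ≥ 3` is not a power of `2`, then the exponent of the Weyl group
`W(Dₙ) = Vₑ ⋊ Sₙ` equals twice the exponent of the symmetric group `Sₙ`. -/
theorem exponent_weylD_of_not_pow_two (n : ℕ) (hn : 3 ≤ n) (h2 : ¬ ∃ k : ℕ, n = 2 ^ k) :
    Monoid.exponent (WD n) = 2 * Monoid.exponent (Equiv.Perm (Fin n)) := by
  set a := Nat.log 2 n
  have hlt : 2 ^ a < n := (Nat.pow_log_le_self 2 (by omega)).lt_of_ne fun h => h2 ⟨a, h.symm⟩
  have ha : 1 ≤ a := Nat.le_log_of_pow_le one_lt_two (by omega)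
  obtain ⟨g, hg⟩ := WD.exists_orderOf_eq_mul_two (Nat.le_self_pow (by omega) 2) hlt
  have hWD : 2 ^ (a + 1) ∣ Monoid.exponent (WD n) :=
    pow_succ 2 a ▸ hg ▸ Monoid.order_dvd_exponent g
  have hS : ¬ 2 ^ (a + 1) ∣ Monoid.exponent (Equiv.Perm (Fin n)) := by
    rw [Nat.prime_two.pow_dvd_iff_le_factorization Monoid.exponent_ne_zero_of_finite, not_le,
      Nat.lt_succ_iff]
    simpa using Equiv.Perm.factorization_exponent_le_log (α := Fin n) Nat.prime_two
  refine Nat.eq_two_mul_of_dvd_of_dvd_two_mul SemidirectProduct.exponent_right_dvd ?_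
    fun h => hS (h ▸ hWD)
  exact SemidirectProduct.exponent_dvd_mul.trans (Nat.mul_dvd_mul_right Ve.exponent_dvd_two _)
end
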